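/- For every m > 0, a > 0 with m² > 3/sinh²a, the function under the square root in the geodesic ODE, namely (m²sinh²a − 3)cosh²y + 3cosh²a + 2m²sinh²a, is strictly positive for all y > 0, so the geodesic formula dx/dy = √(3+sinh²a)·sinh(y)/√((m²sinh²a−3)cosh²y + 3cosh²a + 2m²sinh²a) defines a function x(y) on all of (0,∞) whose limit slope satisfies y/x(y) → √(m²sinh²a−3)/√(3+sinh²a), equivalently x(y) ~ (√(3+sinh²a)/√(m²sinh²a−3))·y as y → ∞. -/

import Mathlib

open Real Filter

noncomputable def F (a m y : ℝ) : ℝ :=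
  (Real.sqrt (3 + Real.sinh a ^ 2) / Real.sqrt (m^2 * Real.sinh a ^ 2 - 3)) *
    Real.log ((m^2 * Real.sinh a ^ 2 - 3) * Real.cosh y +
      Real.sqrt (m^2 * Real.sinh a ^ 2 - 3) *
        Real.sqrt ((m^2 * Real.sinh a ^ 2 - 3) * Real.cosh y ^ 2 +
          3 * Real.cosh a ^ 2 + 2 * m^2 * Real.sinh a ^ 2))

noncomputable def gg (K B y : ℝ) : ℝ :=
  K * Real.cosh y + Real.sqrt K * Real.sqrt (K * Real.cosh y ^ 2 + B)

lemma exp2_lim : Tendsto (fun y : ℝ => Real.exp (-(2*y))) atTop (nhds 0) := by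
  have h : Tendsto (fun y : ℝ => (2:ℝ)*y) atTop atTop :=
    tendsto_id.const_mul_atTop (by norm_num)
  exact Real.tendsto_exp_atBot.comp (tendsto_neg_atTop_atBot.comp h)

lemma cosh_div_exp : Tendsto (fun y : ℝ => Real.cosh y / Real.exp y) atTop (nhds (1/2)) := by
  have heq : ∀ y : ℝ, Real.cosh y / Real.exp y = 1/2 + Real.exp (-(2*y)) / 2 := by
    intro y
    rw [Real.cosh_eq, show -(2*y) = -y - y by ring, Real.exp_sub,
      div_eq_iff (Real.exp_ne_zero y)]
    have h := Real.exp_ne_zero y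
    field_simp
  simp only [heq]
  have h := (tendsto_const_nhds (x := (1/2:ℝ)) (f := atTop)).add (exp2_lim.div_const 2)
  simpa using h

lemma gg_lim (K B : ℝ) (hK : 0 < K) (hB : 0 < B) (c : ℝ) :
    Tendsto (fun y => (Real.log (gg K B y) - c) / y) atTop (nhds 1) := by
  have hin : ∀ y : ℝ, 0 < K * Real.cosh y ^ 2 + B := fun y =>
    add_pos (mul_pos hK (pow_pos (Real.cosh_pos y) 2)) hB
  have hg : ∀ y, 0 < gg K B y := fun y =>
    add_pos_of_pos_of_nonneg (mul_pos hK (Real.cosh_pos y))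
      (mul_nonneg (Real.sqrt_nonneg _) (Real.sqrt_nonneg _))
  have hE : ∀ y : ℝ, Real.exp (-(2*y)) = ((Real.exp y)^2)⁻¹ := by
    intro y; rw [Real.exp_neg, two_mul, Real.exp_add, sq]
  have l2 : Tendsto (fun y => Real.sqrt (K * Real.cosh y ^ 2 + B) / Real.exp y) atTop
      (nhds (Real.sqrt K / 2)) := by
    have heq : ∀ y : ℝ, Real.sqrt (K * Real.cosh y ^ 2 + B) / Real.exp y
        = Real.sqrt (K * (Real.cosh y / Real.exp y)^2 + B * Real.exp (-(2*y))) := by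
      intro y
      have he := Real.exp_pos y
      rw [hE]
      rw [show K * (Real.cosh y / Real.exp y)^2 + B * ((Real.exp y)^2)⁻¹
          = (K * Real.cosh y ^ 2 + B) / (Real.exp y)^2 by field_simp]
      rw [Real.sqrt_div (hin y).le, Real.sqrt_sq he.le]
    simp only [heq]
    have hlim : Tendsto (fun y => K * (Real.cosh y / Real.exp y)^2 + B * Real.exp (-(2*y)))
        atTop (nhds (K * (1/2)^2 + B * 0)) :=
      ((cosh_div_exp.pow 2).const_mul K).add (exp2_lim.const_mul B)
    have h := (Real.continuous_sqrt.tendsto _).comp hlim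
    have hval : Real.sqrt (K * (1/2)^2 + B * 0) = Real.sqrt K / 2 := by
      rw [show K*(1/2)^2+B*0 = K/4 by ring, show (4:ℝ)=2^2 by norm_num,
        Real.sqrt_div hK.le, Real.sqrt_sq (by norm_num : (0:ℝ) ≤ 2)]
    rw [← hval]
    exact h
  have l3 : Tendsto (fun y => gg K B y / Real.exp y) atTop (nhds K) := by
    have h := (cosh_div_exp.const_mul K).add (l2.const_mul (Real.sqrt K))
    have hval : K * (1/2) + Real.sqrt K * (Real.sqrt K / 2) = K := by
      rw [show Real.sqrt K * (Real.sqrt K / 2) = Real.sqrt K * Real.sqrt K / 2 by ring,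
        Real.mul_self_sqrt hK.le]
      ring
    rw [hval] at h
    refine h.congr fun y => ?_
    unfold gg
    rw [add_div, mul_div_assoc, mul_div_assoc]
  have l4 : Tendsto (fun y => Real.log (gg K B y) - y) atTop (nhds (Real.log K)) := by
    have heq : ∀ y, Real.log (gg K B y) - y = Real.log (gg K B y / Real.exp y) := by
      intro y; rw [Real.log_div (hg y).ne' (Real.exp_ne_zero y), Real.log_exp]
    simp only [heq]
    have := (Real.continuousAt_log hK.ne').tendsto.comp l3
    exact this
  have h5 : Tendsto (fun y => (Real.log (gg K B y) - y)/y) atTop (nhds 0) :=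
    l4.div_atTop tendsto_id
  have h6 : Tendsto (fun y : ℝ => c / y) atTop (nhds 0) :=
    tendsto_const_nhds.div_atTop tendsto_id
  have h7 := (h5.add (tendsto_const_nhds (x := (1:ℝ)) (f := atTop))).sub h6
  have h8 : Tendsto (fun y => (Real.log (gg K B y) - y)/y + 1 - c/y) atTop (nhds 1) := by
    simpa using h7
  refine h8.congr' ?_
  filter_upwards [eventually_gt_atTop (0:ℝ)] with y hy
  field_simp
  ring

theorem stmt_16 (a m : ℝ) (ha : 0 < a) (hm : 0 < m)
    (hm2 : 3 / Real.sinh a ^ 2 < m^2) :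
    (∀ y : ℝ, 0 < y →
      0 < (m^2 * Real.sinh a ^ 2 - 3) * Real.cosh y ^ 2 +
        3 * Real.cosh a ^ 2 + 2 * m^2 * Real.sinh a ^ 2) ∧
    Tendsto (fun y => (F a m y - F a m a) / y) atTop
      (nhds (Real.sqrt (3 + Real.sinh a ^ 2) /
        Real.sqrt (m^2 * Real.sinh a ^ 2 - 3))) := by
  have hs : 0 < Real.sinh a := Real.sinh_pos_iff.mpr ha
  have hK : 0 < m^2 * Real.sinh a ^ 2 - 3 := by
    have := (div_lt_iff₀ (pow_pos hs 2)).mp hm2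
    linarith
  have hB : 0 < 3 * Real.cosh a ^ 2 + 2 * m^2 * Real.sinh a ^ 2 := by
    nlinarith [pow_pos (Real.cosh_pos a) 2, sq_nonneg (m * Real.sinh a)]
  constructor
  · intro y hy
    have := add_pos (mul_pos hK (pow_pos (Real.cosh_pos y) 2)) hB
    linarith
  · have hF : ∀ y, F a m y =
        (Real.sqrt (3 + Real.sinh a ^ 2) / Real.sqrt (m^2 * Real.sinh a ^ 2 - 3)) *
          Real.log (gg (m^2 * Real.sinh a ^ 2 - 3)
            (3 * Real.cosh a ^ 2 + 2 * m^2 * Real.sinh a ^ 2) y) := by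
      intro y; simp only [F, gg, add_assoc]
    have h1 := gg_lim _ _ hK hB (Real.log (gg (m^2 * Real.sinh a ^ 2 - 3)
      (3 * Real.cosh a ^ 2 + 2 * m^2 * Real.sinh a ^ 2) a))
    have h2 := h1.const_mul (Real.sqrt (3 + Real.sinh a ^ 2) /
      Real.sqrt (m^2 * Real.sinh a ^ 2 - 3))
    rw [mul_one] at h2
    refine h2.congr fun y => ?_
    simp only [hF]
    ring
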